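/- With the coupled local flow F from two parametrized Lipschitz processes with constants C_u, C_w, one has the one-step stability estimate d(F(τ,t₀)(u,w), F(τ,t₀)(ū,w̄)) ≤ (e^{C_u τ} + C_w τ)·d((u,w),(ū,w̄)), and consequently for the Euler ε-polygonal F^ε one has d(F^ε(τ,t₀)(u,w), F^ε(τ,t₀)(ū,w̄)) ≤ e^{(C_u + C_w)τ}·d((u,w),(ū,w̄)). -/
import Mathlib


/-- `k` Euler steps of size `ε` of a (time-dependent) map `Φ`, starting at time
`t₀`. -/
def eulerSteps {α : Type*} (Φ : ℝ → ℝ → α → α) (ε t₀ : ℝ) : ℕ → α → α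
  | 0 => id
  | (k + 1) => fun p => Φ ε (t₀ + k * ε) (eulerSteps Φ ε t₀ k p)

/-- The Euler `ε`-polygonal `F^ε(τ,t₀)` associated with a local flow `Φ`:
`k = ⌊τ/ε⌋` full steps of size `ε` followed by a step of size `τ - kε`. -/
noncomputable def eulerPolygonal {α : Type*} (Φ : ℝ → ℝ → α → α) (ε τ t₀ : ℝ)
    (p : α) : α :=
  Φ (τ - (⌊τ / ε⌋₊ : ℝ) * ε) (t₀ + (⌊τ / ε⌋₊ : ℝ) * ε)
    (eulerSteps Φ ε t₀ ⌊τ / ε⌋₊ p)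

/-- One-step stability `d(F(τ,t₀)p, F(τ,t₀)q) ≤ (e^{C_u τ} + C_w τ) d(p,q)` for
the coupled flow of two parametrized Lipschitz processes, and the resulting
stability `d(F^ε(τ,t₀)p, F^ε(τ,t₀)q) ≤ e^{(C_u+C_w)τ} d(p,q)` of its Euler
`ε`-polygonals. -/
theorem coupled_flow_euler_stability
    (U W : Type*) [MetricSpace U] [MetricSpace W]
    (PU : W → ℝ → ℝ → U → U) (PW : U → ℝ → ℝ → W → W)
    (Cu Cw : ℝ) (hCu : 0 < Cu) (hCw : 0 < Cw)
    (hU1 : ∀ w t₀ t, t₀ ≤ t → ∀ u₁ u₂,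
      dist (PU w t t₀ u₁) (PU w t t₀ u₂) ≤ Real.exp (Cu * (t - t₀)) * dist u₁ u₂)
    (hU3 : ∀ w₁ w₂ t₀ t, t₀ ≤ t → ∀ u,
      dist (PU w₁ t t₀ u) (PU w₂ t t₀ u) ≤ Cw * (t - t₀) * dist w₁ w₂)
    (hW1 : ∀ u t₀ t, t₀ ≤ t → ∀ w₁ w₂,
      dist (PW u t t₀ w₁) (PW u t t₀ w₂) ≤ Real.exp (Cu * (t - t₀)) * dist w₁ w₂)
    (hW3 : ∀ u₁ u₂ t₀ t, t₀ ≤ t → ∀ w,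
      dist (PW u₁ t t₀ w) (PW u₂ t t₀ w) ≤ Cw * (t - t₀) * dist u₁ u₂) :
    let Φ : ℝ → ℝ → U × W → U × W :=
      fun τ t₀ p => (PU p.2 (t₀ + τ) t₀ p.1, PW p.1 (t₀ + τ) t₀ p.2)
    (∀ (τ t₀ : ℝ), 0 ≤ τ → ∀ p q : U × W,
      dist (Φ τ t₀ p).1 (Φ τ t₀ q).1 + dist (Φ τ t₀ p).2 (Φ τ t₀ q).2
        ≤ (Real.exp (Cu * τ) + Cw * τ) * (dist p.1 q.1 + dist p.2 q.2)) ∧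
    (∀ (ε τ t₀ : ℝ), 0 < ε → 0 ≤ τ → ∀ p q : U × W,
      dist (eulerPolygonal Φ ε τ t₀ p).1 (eulerPolygonal Φ ε τ t₀ q).1
          + dist (eulerPolygonal Φ ε τ t₀ p).2 (eulerPolygonal Φ ε τ t₀ q).2
        ≤ Real.exp ((Cu + Cw) * τ) * (dist p.1 q.1 + dist p.2 q.2)) := by

  intro Φ
  have key : ∀ (τ t₀ : ℝ), 0 ≤ τ → ∀ p q : U × W,
      dist (Φ τ t₀ p).1 (Φ τ t₀ q).1 + dist (Φ τ t₀ p).2 (Φ τ t₀ q).2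
        ≤ (Real.exp (Cu * τ) + Cw * τ) * (dist p.1 q.1 + dist p.2 q.2) := by
    intro τ t₀ hτ p q
    have ht : t₀ ≤ t₀ + τ := by linarith
    have hts : t₀ + τ - t₀ = τ := by ring
    have h1 : dist (PU p.2 (t₀ + τ) t₀ p.1) (PU q.2 (t₀ + τ) t₀ q.1)
        ≤ Real.exp (Cu * τ) * dist p.1 q.1 + Cw * τ * dist p.2 q.2 := by
      have a := hU1 p.2 t₀ (t₀ + τ) ht p.1 q.1
      have b := hU3 p.2 q.2 t₀ (t₀ + τ) ht q.1
      rw [hts] at a b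
      calc dist (PU p.2 (t₀ + τ) t₀ p.1) (PU q.2 (t₀ + τ) t₀ q.1)
          ≤ dist (PU p.2 (t₀ + τ) t₀ p.1) (PU p.2 (t₀ + τ) t₀ q.1)
            + dist (PU p.2 (t₀ + τ) t₀ q.1) (PU q.2 (t₀ + τ) t₀ q.1) := dist_triangle _ _ _
        _ ≤ _ := by linarith
    have h2 : dist (PW p.1 (t₀ + τ) t₀ p.2) (PW q.1 (t₀ + τ) t₀ q.2)
        ≤ Real.exp (Cu * τ) * dist p.2 q.2 + Cw * τ * dist p.1 q.1 := by
      have a := hW1 p.1 t₀ (t₀ + τ) ht p.2 q.2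
      have b := hW3 p.1 q.1 t₀ (t₀ + τ) ht q.2
      rw [hts] at a b
      calc dist (PW p.1 (t₀ + τ) t₀ p.2) (PW q.1 (t₀ + τ) t₀ q.2)
          ≤ dist (PW p.1 (t₀ + τ) t₀ p.2) (PW p.1 (t₀ + τ) t₀ q.2)
            + dist (PW p.1 (t₀ + τ) t₀ q.2) (PW q.1 (t₀ + τ) t₀ q.2) := dist_triangle _ _ _
        _ ≤ _ := by linarith
    have expand : (Real.exp (Cu * τ) + Cw * τ) * (dist p.1 q.1 + dist p.2 q.2)
        = (Real.exp (Cu * τ) * dist p.1 q.1 + Cw * τ * dist p.2 q.2)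
          + (Real.exp (Cu * τ) * dist p.2 q.2 + Cw * τ * dist p.1 q.1) := by ring
    simp only [Φ]
    linarith
  refine ⟨key, ?_⟩
  have expb : ∀ τ : ℝ, 0 ≤ τ → Real.exp (Cu * τ) + Cw * τ ≤ Real.exp ((Cu + Cw) * τ) := by
    intro τ hτ
    have h1 : (1 : ℝ) ≤ Real.exp (Cu * τ) := Real.one_le_exp (mul_nonneg hCu.le hτ)
    have h2 : Cw * τ + 1 ≤ Real.exp (Cw * τ) := Real.add_one_le_exp (Cw * τ)
    have h3 : (0 : ℝ) < Real.exp (Cu * τ) := Real.exp_pos _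
    have h4 : 0 ≤ Cw * τ := mul_nonneg hCw.le hτ
    have : Real.exp (Cu * τ) + Cw * τ ≤ Real.exp (Cu * τ) * Real.exp (Cw * τ) := by
      nlinarith
    calc Real.exp (Cu * τ) + Cw * τ ≤ Real.exp (Cu * τ) * Real.exp (Cw * τ) := this
      _ = Real.exp ((Cu + Cw) * τ) := by rw [← Real.exp_add]; ring_nf
  intro ε τ t₀ hε hτ p q
  have hDnn : ∀ p q : U × W, 0 ≤ dist p.1 q.1 + dist p.2 q.2 := fun p q =>
    add_nonneg dist_nonneg dist_nonneg
  have hsteps : ∀ k : ℕ, ∀ p q : U × W,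
      dist (eulerSteps Φ ε t₀ k p).1 (eulerSteps Φ ε t₀ k q).1
        + dist (eulerSteps Φ ε t₀ k p).2 (eulerSteps Φ ε t₀ k q).2
      ≤ Real.exp ((Cu + Cw) * (k * ε)) * (dist p.1 q.1 + dist p.2 q.2) := by
    intro k
    induction k with
    | zero => intro p q; simp [eulerSteps]
    | succ k ih =>
      intro p q
      have step := key ε (t₀ + k * ε) hε.le (eulerSteps Φ ε t₀ k p) (eulerSteps Φ ε t₀ k q)
      have hb := expb ε hε.le
      calc dist (eulerSteps Φ ε t₀ (k+1) p).1 (eulerSteps Φ ε t₀ (k+1) q).1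
            + dist (eulerSteps Φ ε t₀ (k+1) p).2 (eulerSteps Φ ε t₀ (k+1) q).2
          ≤ (Real.exp (Cu * ε) + Cw * ε)
            * (dist (eulerSteps Φ ε t₀ k p).1 (eulerSteps Φ ε t₀ k q).1
              + dist (eulerSteps Φ ε t₀ k p).2 (eulerSteps Φ ε t₀ k q).2) := step
        _ ≤ Real.exp ((Cu + Cw) * ε)
            * (Real.exp ((Cu + Cw) * (k * ε)) * (dist p.1 q.1 + dist p.2 q.2)) := by
            apply mul_le_mul hb (ih p q) (hDnn _ _) (Real.exp_pos _).le
        _ = Real.exp ((Cu + Cw) * ((k + 1 : ℕ) * ε)) * (dist p.1 q.1 + dist p.2 q.2) := by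
            rw [← mul_assoc, ← Real.exp_add]
            push_cast
            ring_nf
  set k := ⌊τ / ε⌋₊ with hk
  have hkτ : (k : ℝ) * ε ≤ τ := by
    have h := Nat.floor_le (div_nonneg hτ hε.le)
    calc (k : ℝ) * ε ≤ (τ / ε) * ε := by
          apply mul_le_mul_of_nonneg_right h hε.le
      _ = τ := div_mul_cancel₀ τ hε.ne'
  have hrem : 0 ≤ τ - (k : ℝ) * ε := by linarith
  have step := key (τ - (k : ℝ) * ε) (t₀ + (k : ℝ) * ε) hrem
    (eulerSteps Φ ε t₀ k p) (eulerSteps Φ ε t₀ k q)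
  have hb := expb (τ - (k : ℝ) * ε) hrem
  calc dist (eulerPolygonal Φ ε τ t₀ p).1 (eulerPolygonal Φ ε τ t₀ q).1
        + dist (eulerPolygonal Φ ε τ t₀ p).2 (eulerPolygonal Φ ε τ t₀ q).2
      ≤ (Real.exp (Cu * (τ - (k : ℝ) * ε)) + Cw * (τ - (k : ℝ) * ε))
        * (dist (eulerSteps Φ ε t₀ k p).1 (eulerSteps Φ ε t₀ k q).1
          + dist (eulerSteps Φ ε t₀ k p).2 (eulerSteps Φ ε t₀ k q).2) := step
    _ ≤ Real.exp ((Cu + Cw) * (τ - (k : ℝ) * ε))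
        * (Real.exp ((Cu + Cw) * ((k : ℝ) * ε)) * (dist p.1 q.1 + dist p.2 q.2)) := by
        apply mul_le_mul hb (hsteps k p q) (hDnn _ _) (Real.exp_pos _).le
    _ = Real.exp ((Cu + Cw) * τ) * (dist p.1 q.1 + dist p.2 q.2) := by
        rw [← mul_assoc, ← Real.exp_add]; ring_nf
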